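/- Let m, N be positive integers, α, β ∈ (0,1), let S_1,…,S_m be real numbers and S̃_1,…,S̃_N be pairwise distinct real numbers. For every η ∈ ℝ with η ∉ {S̃_1,…,S̃_N}, the following equivalence holds: T(η) ≤ Q̃_{1−α} if and only if η ≤ max{ min{ Q̃′_{1−α}, S_{(R̃^−)} }, S_{(R̃^+)} }, where R̃^± = max{ r ∈ {1,…,m+1} : R_r^± ≤ ⌈(1−α)(N+1)⌉ } (with the convention that S_{(R̃^±)} = −∞ if the corresponding set is empty), and S_{(m+1)} = +∞. -/

import Mathlib

open MeasureTheory ProbabilityTheory Finset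

noncomputable section

/-- The `r`-th order statistic (0-indexed) of a finite tuple of reals: the values
sorted in increasing order. -/
def orderStat {n : ℕ} (f : Fin n → ℝ) : Fin n → ℝ := f ∘ Tuple.sort f

/-- The probability mass function `p_{m,N,r}(k)` of the `r`-th order statistic of a
sample of size `m+1` drawn without replacement from a population of size `N+m+1`. -/
def pWindow (m N r k : ℕ) : ℝ :=
  (((k + r - 2).choose (r - 1) * (N + m + 2 - k - r).choose (m + 1 - r) : ℕ) : ℝ) /
    (((N + m + 1).choose (m + 1) : ℕ) : ℝ)

/-- `F_{m,N,r}(t) = Σ_{k=1}^t p_{m,N,r}(k)`, with `F(0) = 0`. -/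
def Fwindow (m N r t : ℕ) : ℝ := ∑ k ∈ Finset.Icc 1 t, pWindow m N r k

/-- `R_r^- = max {t ∈ {1,…,N+1} : F_{m,N,r}(t-1) ≤ β/2}`. -/
def Rminus (m N : ℕ) (β : ℝ) (r : ℕ) : ℕ :=
  sSup {t | t ∈ Finset.Icc 1 (N + 1) ∧ Fwindow m N r (t - 1) ≤ β / 2}

/-- `R_r^+ = min {t ∈ {1,…,N+1} : F_{m,N,r}(t) ≥ 1 - β/2}`. -/
def Rplus (m N : ℕ) (β : ℝ) (r : ℕ) : ℕ :=
  sInf {t | t ∈ Finset.Icc 1 (N + 1) ∧ 1 - β / 2 ≤ Fwindow m N r t}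

/-- `S̃_{(t)}`, the `t`-th smallest synthetic score for `t ∈ {1,…,N}`, with the
convention `S̃_{(N+1)} = +∞` (value in `EReal`). -/
def synthSorted (N : ℕ) (g : Fin N → ℝ) (t : ℕ) : EReal :=
  if h : 1 ≤ t ∧ t ≤ N then ((orderStat g ⟨t - 1, by omega⟩ : ℝ) : EReal) else ⊤

/-- The lower window endpoint `L_m(r) = S̃_{(R_r^-)}`. -/
def windowLo (m N : ℕ) (β : ℝ) (g : Fin N → ℝ) (r : ℕ) : EReal :=
  synthSorted N g (Rminus m N β r)

/-- The upper window endpoint `U_m(r) = S̃_{(R_r^+)}`. -/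
def windowHi (m N : ℕ) (β : ℝ) (g : Fin N → ℝ) (r : ℕ) : EReal :=
  synthSorted N g (Rplus m N β r)

/-- The rank `r_η = 1 + #{i : S_i < η}` of `η` among the real calibration scores. -/
def rankOf (m : ℕ) (S : Fin m → ℝ) (η : ℝ) : ℕ :=
  1 + (Finset.univ.filter fun i => S i < η).card

/-- The lower nearest neighbor `NN_m^-(r,η)`: the largest synthetic order statistic
`S̃_{(j)}` with `R_r^- ≤ j ≤ R_r^+` and `S̃_{(j)} ≤ η`. -/
def NNminus (m N : ℕ) (β : ℝ) (g : Fin N → ℝ) (r : ℕ) (η : ℝ) : EReal :=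
  sSup {x : EReal | ∃ j : ℕ, Rminus m N β r ≤ j ∧ j ≤ Rplus m N β r ∧
    x = synthSorted N g j ∧ x ≤ (η : EReal)}

/-- The score transporter `T`. -/
def transport (m N : ℕ) (β : ℝ) (S : Fin m → ℝ) (g : Fin N → ℝ) (η : ℝ) : EReal :=
  if windowHi m N β g (rankOf m S η) ≤ (η : EReal) then windowHi m N β g (rankOf m S η)
  else if windowLo m N β g (rankOf m S η) ≤ (η : EReal) then NNminus m N β g (rankOf m S η) η
  else windowLo m N β g (rankOf m S η)

/-- The quantile index `⌈(1-α)(N+1)⌉`. -/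
def qIdx (N : ℕ) (α : ℝ) : ℕ := ⌈(1 - α) * ((N : ℝ) + 1)⌉₊

/-- `Q̃_{1-α}`, the `⌈(1-α)(N+1)⌉`-th smallest synthetic score (`+∞` if the index is `N+1`). -/
def synthQuantile (N : ℕ) (g : Fin N → ℝ) (α : ℝ) : EReal := synthSorted N g (qIdx N α)

/-- `S_{(t)}` for the real calibration scores, `t ∈ {1,…,m}`, with the conventions
`S_{(m+1)} = +∞` and `-∞` for out-of-range indices (e.g. an empty maximum). -/
def realSorted (m : ℕ) (S : Fin m → ℝ) (t : ℕ) : EReal :=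
  if h : 1 ≤ t ∧ t ≤ m then ((orderStat S ⟨t - 1, by omega⟩ : ℝ) : EReal)
  else if t = m + 1 then ⊤ else ⊥

/-- Total variation distance between two (probability) measures on `ℝ`. -/
def tvDist (μ ν : Measure ℝ) : ℝ :=
  ⨆ A : {s : Set ℝ // MeasurableSet s}, |(μ A.1).toReal - (ν A.1).toReal|

/-- The law of the `i`-th order statistic of `n` i.i.d. draws from `P`. -/
def orderStatLaw (n : ℕ) (P : Measure ℝ) (i : Fin n) : Measure ℝ :=
  (Measure.pi fun _ : Fin n => P).map fun f => orderStat f i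

end

/-- `R̃^- = max{r ∈ {1,…,m+1} : R_r^- ≤ ⌈(1−α)(N+1)⌉}` (`0` if no such `r`). -/
noncomputable def RtilMinus (m N : ℕ) (β α : ℝ) : ℕ :=
  sSup {r | r ∈ Finset.Icc 1 (m + 1) ∧ Rminus m N β r ≤ qIdx N α}

/-- `R̃^+ = max{r ∈ {1,…,m+1} : R_r^+ ≤ ⌈(1−α)(N+1)⌉}` (`0` if no such `r`). -/
noncomputable def RtilPlus (m N : ℕ) (β α : ℝ) : ℕ :=
  sSup {r | r ∈ Finset.Icc 1 (m + 1) ∧ Rplus m N β r ≤ qIdx N α}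

/-- The threshold `max{min{Q̃′_{1−α}, S_{(R̃^−)}}, S_{(R̃^+)}}` of the fast prediction set,
where `Q̃′_{1−α}` is the `(⌈(1−α)(N+1)⌉+1)`-th smallest synthetic score, `S_{(m+1)} = +∞`,
and `S_{(R̃^±)} = -∞` if the corresponding maximum is over an empty set. -/
noncomputable def fastThreshold (m N : ℕ) (β α : ℝ) (S : Fin m → ℝ) (g : Fin N → ℝ) : EReal :=
  max (min (synthSorted N g (qIdx N α + 1)) (realSorted m S (RtilMinus m N β α)))
    (realSorted m S (RtilPlus m N β α))


/-- The numerator sum. -/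
def Anat (m N r t : ℕ) : ℕ :=
  ∑ k ∈ Icc 1 t, (k + r - 2).choose (r - 1) * (N + m + 2 - k - r).choose (m + 1 - r)

lemma keyId (a b N : ℕ) : ∀ t, t ≤ N + 1 →
    ∑ k ∈ Icc 1 t, ((k - 1) + a).choose a * ((N + 1 - k) + (b + 1)).choose (b + 1)
    = (∑ k ∈ Icc 1 t, (k + a).choose (a + 1) * ((N + 1 - k) + b).choose b)
      + (t + a).choose (a + 1) * ((N + 1 - t) + b).choose (b + 1) := by
  intro t
  induction t with
  | zero => simp [Nat.choose_eq_zero_of_lt (Nat.lt_succ_self a)]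
  | succ t ih =>
    intro ht
    have ht' : t ≤ N := by omega
    rw [Finset.sum_Icc_succ_top (by omega : 1 ≤ t + 1),
        Finset.sum_Icc_succ_top (by omega : 1 ≤ t + 1), ih (by omega)]
    have h1 : t + 1 - 1 = t := by omega
    have h2 : N + 1 - (t + 1) = N - t := by omega
    have h3 : N + 1 - t = (N - t) + 1 := by omega
    rw [h1, h2, h3]
    set c := N - t with hc
    have p1 : (t + a + 1).choose (a + 1) = (t + a).choose (a + 1) + (t + a).choose a := by
      rw [Nat.choose_succ_succ]; exact Nat.add_comm _ _
    have p2 : (c + b).choose b + (c + b).choose (b + 1) = (c + b + 1).choose (b + 1) := by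
      rw [Nat.choose_succ_succ]
    have e1 : c + 1 + b = c + b + 1 := by ring
    have e2 : c + (b + 1) = c + b + 1 := by ring
    rw [e1, e2]
    have : (t + a).choose (a + 1) * (c + b + 1).choose (b + 1)
        + (t + a).choose a * (c + b + 1).choose (b + 1)
        = (t + 1 + a).choose (a + 1) * ((c + b).choose b + (c + b).choose (b + 1)) := by
      rw [p2]
      have e : t + 1 + a = t + a + 1 := by ring
      rw [e, p1]; ring
    linarith [this]

lemma Anat_step (m N r t : ℕ) (hr1 : 1 ≤ r) (hrm : r ≤ m) (ht : t ≤ N + 1) :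
    Anat m N r t = Anat m N (r + 1) t
      + (t + (r - 1)).choose r * ((N + 1 - t) + (m - r)).choose ((m - r) + 1) := by
  obtain ⟨a, ha⟩ : ∃ a, r = a + 1 := ⟨r - 1, by omega⟩
  obtain ⟨b, hb⟩ : ∃ b, m = a + b + 1 := ⟨m - r, by omega⟩
  subst ha hb
  have hL : Anat (a + b + 1) N (a + 1) t
      = ∑ k ∈ Icc 1 t, ((k - 1) + a).choose a * ((N + 1 - k) + (b + 1)).choose (b + 1) := by
    refine Finset.sum_congr rfl fun k hk => ?_
    simp only [Finset.mem_Icc] at hk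
    have e1 : k + (a + 1) - 2 = (k - 1) + a := by omega
    have e2 : N + (a + b + 1) + 2 - k - (a + 1) = (N + 1 - k) + (b + 1) := by omega
    have e3 : (a + b + 1) + 1 - (a + 1) = b + 1 := by omega
    rw [e1, e2, e3, show a + 1 - 1 = a from rfl]
  have hR : Anat (a + b + 1) N (a + 1 + 1) t
      = ∑ k ∈ Icc 1 t, (k + a).choose (a + 1) * ((N + 1 - k) + b).choose b := by
    refine Finset.sum_congr rfl fun k hk => ?_
    simp only [Finset.mem_Icc] at hk
    have e1 : k + (a + 1 + 1) - 2 = k + a := by omega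
    have e2 : N + (a + b + 1) + 2 - k - (a + 1 + 1) = (N + 1 - k) + b := by omega
    have e3 : (a + b + 1) + 1 - (a + 1 + 1) = b := by omega
    rw [e1, e2, e3, show a + 1 + 1 - 1 = a + 1 from rfl]
  rw [hL, hR, keyId a b N t ht, show a + 1 - 1 = a from rfl,
    show a + b + 1 - (a + 1) = b by omega]

lemma Anat_total (m N : ℕ) : ∀ r, 1 ≤ r → r ≤ m + 1 →
    Anat m N r (N + 1) = (N + m + 1).choose (m + 1) := by
  have base : Anat m N 1 (N + 1) = (N + m + 1).choose (m + 1) := by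
    unfold Anat
    have h1 : ∀ k ∈ Icc 1 (N + 1),
        (k + 1 - 2).choose 0 * (N + m + 2 - k - 1).choose (m + 1 - 1)
          = (m + (N + 1 - k)).choose m := by
      intro k hk
      simp only [Finset.mem_Icc] at hk
      rw [Nat.choose_zero_right, one_mul]
      congr 1 <;> omega
    rw [Finset.sum_congr rfl h1]
    have h2 : ∑ k ∈ Icc 1 (N + 1), (m + (N + 1 - k)).choose m
        = ∑ j ∈ Finset.range (N + 1), (m + j).choose m := by
      refine Finset.sum_nbij' (fun k => N + 1 - k) (fun j => N + 1 - j) ?_ ?_ ?_ ?_ ?_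
      · intro k hk; simp only [Finset.mem_Icc] at hk; simp only [Finset.mem_range]; omega
      · intro j hj; simp only [Finset.mem_range] at hj; simp only [Finset.mem_Icc]; omega
      · intro k hk; simp only [Finset.mem_Icc] at hk; show N + 1 - (N + 1 - k) = k; omega
      · intro j hj; simp only [Finset.mem_range] at hj; show N + 1 - (N + 1 - j) = j; omega
      · intro k hk; rfl
    rw [h2]
    have h3 : ∑ j ∈ Finset.range (N + 1), (m + j).choose m
        = ∑ i ∈ Icc m (m + N), i.choose m := by
      refine Finset.sum_nbij' (fun j => m + j) (fun i => i - m) ?_ ?_ ?_ ?_ ?_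
      · intro j hj; simp only [Finset.mem_range] at hj; simp only [Finset.mem_Icc]; omega
      · intro i hi; simp only [Finset.mem_Icc] at hi; simp only [Finset.mem_range]; omega
      · intro j hj; show m + j - m = j; omega
      · intro i hi; simp only [Finset.mem_Icc] at hi; show m + (i - m) = i; omega
      · intro j hj; rfl
    rw [h3, Nat.sum_Icc_choose]
    congr 1
    omega
  intro r
  induction r with
  | zero => omega
  | succ r ih =>
    intro _ hr
    rcases Nat.eq_or_lt_of_le (by omega : 1 ≤ r + 1) with h | h
    · rw [← h]; exact base
    · have hr1 : 1 ≤ r := by omega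
      have hrm : r ≤ m := by omega
      have := Anat_step m N r (N + 1) hr1 hrm (le_refl _)
      have hz : ((N + 1 - (N + 1)) + (m - r)).choose ((m - r) + 1) = 0 := by
        apply Nat.choose_eq_zero_of_lt; omega
      simp only [hz, Nat.mul_zero, Nat.add_zero] at this
      rw [← this]
      exact ih hr1 (by omega)

section Analysis

variable {m N : ℕ}

lemma pWindow_nonneg (m N r k : ℕ) : 0 ≤ pWindow m N r k :=
  div_nonneg (Nat.cast_nonneg _) (Nat.cast_nonneg _)

lemma Fwindow_eq_div (m N r t : ℕ) :
    Fwindow m N r t = (Anat m N r t : ℝ) / (((N + m + 1).choose (m + 1) : ℕ) : ℝ) := by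
  unfold Fwindow pWindow Anat
  rw [← Finset.sum_div, Nat.cast_sum]

lemma Fwindow_mono (m N r : ℕ) {t t' : ℕ} (h : t ≤ t') : Fwindow m N r t ≤ Fwindow m N r t' :=
  Finset.sum_le_sum_of_subset_of_nonneg (Finset.Icc_subset_Icc_right h)
    (fun k _ _ => pWindow_nonneg m N r k)

lemma Fwindow_nonneg (m N r t : ℕ) : 0 ≤ Fwindow m N r t :=
  Finset.sum_nonneg fun k _ => pWindow_nonneg m N r k

lemma choose_pos_real (m N : ℕ) : (0:ℝ) < (((N + m + 1).choose (m + 1) : ℕ) : ℝ) := by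
  exact_mod_cast Nat.choose_pos (by omega)

lemma Fwindow_total (m N r : ℕ) (hr1 : 1 ≤ r) (hrm : r ≤ m + 1) :
    Fwindow m N r (N + 1) = 1 := by
  rw [Fwindow_eq_div, Anat_total m N r hr1 hrm]
  exact div_self (ne_of_gt (choose_pos_real m N))

lemma Anat_anti_step (m N n t : ℕ) (h1 : 1 ≤ n) (hm : n ≤ m) (ht : t ≤ N + 1) :
    Anat m N (n + 1) t ≤ Anat m N n t := by
  rw [Anat_step m N n t h1 hm ht]
  exact Nat.le_add_right _ _

lemma Fwindow_anti (m N : ℕ) {r t : ℕ} (hr1 : 1 ≤ r) (ht : t ≤ N + 1) :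
    ∀ r', r ≤ r' → r' ≤ m + 1 → Fwindow m N r' t ≤ Fwindow m N r t := by
  intro r' hrr
  induction r', hrr using Nat.le_induction with
  | base => exact fun _ => le_rfl
  | succ n hn ih =>
    intro hnm
    have h1 : Fwindow m N (n + 1) t ≤ Fwindow m N n t := by
      rw [Fwindow_eq_div, Fwindow_eq_div]
      gcongr
      exact_mod_cast Anat_anti_step m N n t (by omega) (by omega) ht
    exact le_trans h1 (ih (by omega))

end Analysis


section RL

lemma Fwindow_zero (m N r : ℕ) : Fwindow m N r 0 = 0 := by
  unfold Fwindow
  rw [Finset.Icc_eq_empty (by omega), Finset.sum_empty]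

lemma RmSet_nonempty (m N r : ℕ) {β : ℝ} (hβ : 0 < β) :
    (1 : ℕ) ∈ {t | t ∈ Finset.Icc 1 (N + 1) ∧ Fwindow m N r (t - 1) ≤ β / 2} := by
  refine ⟨Finset.mem_Icc.mpr ⟨le_rfl, by omega⟩, ?_⟩
  rw [show (1:ℕ) - 1 = 0 from rfl, Fwindow_zero]
  linarith

lemma RmSet_bdd (m N r : ℕ) (β : ℝ) :
    BddAbove {t | t ∈ Finset.Icc 1 (N + 1) ∧ Fwindow m N r (t - 1) ≤ β / 2} :=
  ⟨N + 1, fun t ht => (Finset.mem_Icc.mp ht.1).2⟩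

lemma Rminus_mem (m N r : ℕ) {β : ℝ} (hβ : 0 < β) :
    Rminus m N β r ∈ {t | t ∈ Finset.Icc 1 (N + 1) ∧ Fwindow m N r (t - 1) ≤ β / 2} :=
  Nat.sSup_mem ⟨1, RmSet_nonempty m N r hβ⟩ (RmSet_bdd m N r β)

lemma RpSet_bdd (m N r : ℕ) (β : ℝ) :
    (N + 1 : ℕ) ∈ {t | t ∈ Finset.Icc 1 (N + 1) ∧ 1 - β / 2 ≤ Fwindow m N r t} → True := fun _ => trivial

lemma RpSet_nonempty (m N r : ℕ) {β : ℝ} (hβ : 0 < β) (hr1 : 1 ≤ r) (hrm : r ≤ m + 1) :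
    (N + 1 : ℕ) ∈ {t | t ∈ Finset.Icc 1 (N + 1) ∧ 1 - β / 2 ≤ Fwindow m N r t} := by
  refine ⟨Finset.mem_Icc.mpr ⟨by omega, le_rfl⟩, ?_⟩
  rw [Fwindow_total m N r hr1 hrm]
  linarith

lemma Rplus_mem (m N r : ℕ) {β : ℝ} (hβ : 0 < β) (hr1 : 1 ≤ r) (hrm : r ≤ m + 1) :
    Rplus m N β r ∈ {t | t ∈ Finset.Icc 1 (N + 1) ∧ 1 - β / 2 ≤ Fwindow m N r t} :=
  Nat.sInf_mem ⟨N + 1, RpSet_nonempty m N r hβ hr1 hrm⟩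

lemma Rminus_ge_one (m N r : ℕ) {β : ℝ} (hβ : 0 < β) : 1 ≤ Rminus m N β r :=
  (Finset.mem_Icc.mp (Rminus_mem m N r hβ).1).1

lemma Rminus_le_Nsucc (m N r : ℕ) {β : ℝ} (hβ : 0 < β) : Rminus m N β r ≤ N + 1 :=
  (Finset.mem_Icc.mp (Rminus_mem m N r hβ).1).2

lemma Rplus_ge_one (m N r : ℕ) {β : ℝ} (hβ : 0 < β) (hr1 : 1 ≤ r) (hrm : r ≤ m + 1) :
    1 ≤ Rplus m N β r :=
  (Finset.mem_Icc.mp (Rplus_mem m N r hβ hr1 hrm).1).1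

lemma Rplus_le_Nsucc (m N r : ℕ) {β : ℝ} (hβ : 0 < β) (hr1 : 1 ≤ r) (hrm : r ≤ m + 1) :
    Rplus m N β r ≤ N + 1 :=
  (Finset.mem_Icc.mp (Rplus_mem m N r hβ hr1 hrm).1).2

lemma Rminus_le_Rplus (m N r : ℕ) {β : ℝ} (hβ : 0 < β) (hβ1 : β < 1)
    (hr1 : 1 ≤ r) (hrm : r ≤ m + 1) : Rminus m N β r ≤ Rplus m N β r := by
  by_contra hc
  push_neg at hc
  have h1 := (Rminus_mem m N r hβ).2
  have h2 := (Rplus_mem m N r hβ hr1 hrm).2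
  have h3 : Fwindow m N r (Rplus m N β r) ≤ Fwindow m N r (Rminus m N β r - 1) :=
    Fwindow_mono m N r (by omega)
  linarith

lemma Rminus_mono (m N : ℕ) {β : ℝ} (hβ : 0 < β) {r r' : ℕ} (hr1 : 1 ≤ r) (hrr : r ≤ r')
    (hrm : r' ≤ m + 1) : Rminus m N β r ≤ Rminus m N β r' := by
  apply csSup_le_csSup (RmSet_bdd m N r' β) ⟨1, RmSet_nonempty m N r hβ⟩
  rintro t ⟨ht1, ht2⟩
  refine ⟨ht1, le_trans ?_ ht2⟩
  exact Fwindow_anti m N hr1 (by have := (Finset.mem_Icc.mp ht1).2; omega) r' hrr hrm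

lemma Rplus_mono (m N : ℕ) {β : ℝ} (hβ : 0 < β) {r r' : ℕ} (hr1 : 1 ≤ r) (hrr : r ≤ r')
    (hrm : r' ≤ m + 1) : Rplus m N β r ≤ Rplus m N β r' := by
  apply Nat.sInf_le
  have hmem := Rplus_mem m N r' hβ (by omega) hrm
  refine ⟨hmem.1, le_trans hmem.2 ?_⟩
  exact Fwindow_anti m N hr1 (by have := (Finset.mem_Icc.mp hmem.1).2; omega) r' hrr hrm

lemma le_RtilPlus_iff (m N : ℕ) {β α : ℝ} (hβ : 0 < β) {ρ : ℕ} (hρ1 : 1 ≤ ρ) (hρm : ρ ≤ m + 1) :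
    ρ ≤ RtilPlus m N β α ↔ Rplus m N β ρ ≤ qIdx N α := by
  constructor
  · intro h
    have hne : {r | r ∈ Finset.Icc 1 (m + 1) ∧ Rplus m N β r ≤ qIdx N α}.Nonempty := by
      by_contra h'
      rw [Set.not_nonempty_iff_eq_empty] at h'
      rw [RtilPlus, h'] at h
      simp [csSup_empty] at h
      omega
    have hmem := Nat.sSup_mem hne ⟨m + 1, fun t ht => (Finset.mem_Icc.mp ht.1).2⟩
    obtain ⟨hIcc, hq⟩ := hmem
    exact le_trans (Rplus_mono m N hβ hρ1 h (Finset.mem_Icc.mp hIcc).2) hq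
  · intro h
    exact le_csSup ⟨m + 1, fun t ht => (Finset.mem_Icc.mp ht.1).2⟩
      ⟨Finset.mem_Icc.mpr ⟨hρ1, hρm⟩, h⟩

lemma le_RtilMinus_iff (m N : ℕ) {β α : ℝ} (hβ : 0 < β) {ρ : ℕ} (hρ1 : 1 ≤ ρ) (hρm : ρ ≤ m + 1) :
    ρ ≤ RtilMinus m N β α ↔ Rminus m N β ρ ≤ qIdx N α := by
  constructor
  · intro h
    have hne : {r | r ∈ Finset.Icc 1 (m + 1) ∧ Rminus m N β r ≤ qIdx N α}.Nonempty := by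
      by_contra h'
      rw [Set.not_nonempty_iff_eq_empty] at h'
      rw [RtilMinus, h'] at h
      simp [csSup_empty] at h
      omega
    have hmem := Nat.sSup_mem hne ⟨m + 1, fun t ht => (Finset.mem_Icc.mp ht.1).2⟩
    obtain ⟨hIcc, hq⟩ := hmem
    exact le_trans (Rminus_mono m N hβ hρ1 h (Finset.mem_Icc.mp hIcc).2) hq
  · intro h
    exact le_csSup ⟨m + 1, fun t ht => (Finset.mem_Icc.mp ht.1).2⟩
      ⟨Finset.mem_Icc.mpr ⟨hρ1, hρm⟩, h⟩

lemma qIdx_ge_one (N : ℕ) {α : ℝ} (hα : α < 1) : 1 ≤ qIdx N α := by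
  rw [qIdx]
  refine Nat.ceil_pos.mpr ?_
  nlinarith [Nat.cast_nonneg (α := ℝ) N]

lemma qIdx_le (N : ℕ) {α : ℝ} (hα : 0 < α) : qIdx N α ≤ N + 1 := by
  rw [qIdx, Nat.ceil_le]
  push_cast
  nlinarith [Nat.cast_nonneg (α := ℝ) N]

end RL


section Synth

variable {N : ℕ} {G : Fin N → ℝ}

lemma orderStat_mono (f : Fin N → ℝ) : Monotone (orderStat f) := Tuple.monotone_sort f

lemma orderStat_strictMono (hG : Function.Injective G) : StrictMono (orderStat G) :=
  (orderStat_mono G).strictMono_of_injective (hG.comp (Equiv.injective _))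

lemma synthSorted_mono {s t : ℕ} (h1 : 1 ≤ s) (hst : s ≤ t) :
    synthSorted N G s ≤ synthSorted N G t := by
  unfold synthSorted
  by_cases ht : 1 ≤ t ∧ t ≤ N
  · rw [dif_pos ht, dif_pos ⟨h1, by omega⟩]
    exact EReal.coe_le_coe_iff.mpr (orderStat_mono G (by simp [Fin.mk_le_mk]; omega))
  · rw [dif_neg ht]
    exact le_top

lemma synthSorted_strict (hG : Function.Injective G) {s t : ℕ} (h1 : 1 ≤ s) (hsN : s ≤ N)
    (hst : s < t) : synthSorted N G s < synthSorted N G t := by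
  unfold synthSorted
  rw [dif_pos ⟨h1, hsN⟩]
  by_cases ht : 1 ≤ t ∧ t ≤ N
  · rw [dif_pos ht]
    exact EReal.coe_lt_coe_iff.mpr (orderStat_strictMono hG (by simp [Fin.mk_lt_mk]; omega))
  · rw [dif_neg ht]
    exact EReal.coe_lt_top _

lemma synthSorted_le_iff (hG : Function.Injective G) {s t : ℕ} (hs1 : 1 ≤ s) (hsN : s ≤ N + 1)
    (ht1 : 1 ≤ t) (htN : t ≤ N + 1) : synthSorted N G s ≤ synthSorted N G t ↔ s ≤ t := by
  constructor
  · intro h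
    by_contra hc
    push_neg at hc
    exact absurd h (not_le.mpr (synthSorted_strict hG ht1 (by omega) hc))
  · exact synthSorted_mono hs1

lemma synthSorted_ne {η : ℝ} (hη : ∀ j, G j ≠ η) {t : ℕ} (h1 : 1 ≤ t) (htN : t ≤ N) :
    synthSorted N G t ≠ ((η : ℝ) : EReal) := by
  unfold synthSorted
  rw [dif_pos ⟨h1, htN⟩]
  intro h
  exact hη _ (EReal.coe_eq_coe_iff.mp h)

lemma not_synth_le_iff {η : ℝ} (hη : ∀ j, G j ≠ η) {t : ℕ} (h1 : 1 ≤ t) (htN : t ≤ N + 1) :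
    (¬ synthSorted N G t ≤ ((η : ℝ) : EReal)) ↔ ((η : ℝ) : EReal) ≤ synthSorted N G t := by
  constructor
  · intro h
    exact (not_le.mp h).le
  · intro h hc
    have heq : synthSorted N G t = ((η : ℝ) : EReal) := le_antisymm hc h
    by_cases htN' : t ≤ N
    · exact synthSorted_ne hη h1 htN' heq
    · have : synthSorted N G t = ⊤ := by
        unfold synthSorted
        rw [dif_neg (by omega)]
      rw [this] at heq
      exact EReal.coe_ne_top η heq.symm

end Synth

section Rank

variable {m : ℕ} {S : Fin m → ℝ} {η : ℝ}

lemma card_filter_orderStat (S : Fin m → ℝ) (η : ℝ) :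
    (Finset.univ.filter fun j => orderStat S j < η).card
      = (Finset.univ.filter fun i => S i < η).card := by
  apply Finset.card_nbij' (fun j => Tuple.sort S j) (fun i => (Tuple.sort S).symm i)
  · intro j hj
    simp only [Finset.mem_coe, Finset.mem_filter, Finset.mem_univ, true_and] at hj ⊢
    exact hj
  · intro i hi
    simp only [Finset.mem_coe, Finset.mem_filter, Finset.mem_univ, true_and] at hi ⊢
    show orderStat S ((Tuple.sort S).symm i) < η
    unfold orderStat
    simpa using hi
  · intro j _; simp
  · intro i _; simp

lemma rankOf_ge_one (S : Fin m → ℝ) (η : ℝ) : 1 ≤ rankOf m S η := by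
  unfold rankOf; omega

lemma rankOf_le (S : Fin m → ℝ) (η : ℝ) : rankOf m S η ≤ m + 1 := by
  unfold rankOf
  have := Finset.card_filter_le Finset.univ (fun i : Fin m => S i < η)
  simp only [Finset.card_univ, Fintype.card_fin] at this
  omega

lemma rank_le_iff (hm : 0 < m) {t : ℕ} (ht : t ≤ m + 1) :
    ((η : ℝ) : EReal) ≤ realSorted m S t ↔ rankOf m S η ≤ t := by
  unfold realSorted rankOf
  rw [← card_filter_orderStat S η]
  by_cases h1 : 1 ≤ t ∧ t ≤ m
  · rw [dif_pos h1]
    rw [EReal.coe_le_coe_iff]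
    constructor
    · intro h
      have hsub : (Finset.univ.filter fun j => orderStat S j < η)
          ⊆ Finset.Iio (⟨t - 1, by omega⟩ : Fin m) := by
        intro j hj
        simp only [Finset.mem_filter, Finset.mem_univ, true_and] at hj
        rw [Finset.mem_Iio]
        by_contra hc
        push_neg at hc
        have : orderStat S ⟨t - 1, by omega⟩ ≤ orderStat S j := orderStat_mono S hc
        linarith
      have hc1 := Finset.card_le_card hsub
      rw [Fin.card_Iio] at hc1
      simp only at hc1
      omega
    · intro h
      by_contra hc
      push_neg at hc
      have hsub : Finset.Iic (⟨t - 1, by omega⟩ : Fin m)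
          ⊆ Finset.univ.filter fun j => orderStat S j < η := by
        intro j hj
        rw [Finset.mem_Iic] at hj
        simp only [Finset.mem_filter, Finset.mem_univ, true_and]
        have : orderStat S j ≤ orderStat S ⟨t - 1, by omega⟩ := orderStat_mono S hj
        linarith
      have hc1 := Finset.card_le_card hsub
      rw [Fin.card_Iic] at hc1
      simp only at hc1
      omega
  · rw [dif_neg h1]
    by_cases h2 : t = m + 1
    · rw [if_pos h2]
      have hcard := Finset.card_filter_le Finset.univ (fun j : Fin m => orderStat S j < η)
      simp only [Finset.card_univ, Fintype.card_fin] at hcard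
      simp only [le_top, true_iff]
      omega
    · rw [if_neg h2]
      have ht0 : t = 0 := by omega
      subst ht0
      simp only [le_bot_iff]
      constructor
      · intro h
        exact absurd h (EReal.coe_ne_bot η)
      · intro h
        omega

end Rank


lemma RtilMinus_le_msucc (m N : ℕ) (β α : ℝ) : RtilMinus m N β α ≤ m + 1 := by
  rw [RtilMinus]
  rcases Set.eq_empty_or_nonempty
      {r | r ∈ Finset.Icc 1 (m + 1) ∧ Rminus m N β r ≤ qIdx N α} with h | h
  · rw [h, csSup_empty]; exact Nat.zero_le _
  · exact csSup_le h fun x hx => (Finset.mem_Icc.mp hx.1).2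

lemma RtilPlus_le_msucc (m N : ℕ) (β α : ℝ) : RtilPlus m N β α ≤ m + 1 := by
  rw [RtilPlus]
  rcases Set.eq_empty_or_nonempty
      {r | r ∈ Finset.Icc 1 (m + 1) ∧ Rplus m N β r ≤ qIdx N α} with h | h
  · rw [h, csSup_empty]; exact Nat.zero_le _
  · exact csSup_le h fun x hx => (Finset.mem_Icc.mp hx.1).2

/-- deterministic form of Proposition 1: for every `η` not equal to any
synthetic score, `T(η) ≤ Q̃_{1−α}` if and only if `η ≤ max{min{Q̃′_{1−α}, S_{(R̃^−)}}, S_{(R̃^+)}}`. -/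
theorem transport_le_quantile_iff_fast
    (m N : ℕ) (hm : 0 < m) (hN : 0 < N)
    (α β : ℝ) (hα : α ∈ Set.Ioo (0 : ℝ) 1) (hβ : β ∈ Set.Ioo (0 : ℝ) 1)
    (S : Fin m → ℝ) (G : Fin N → ℝ) (hG : Function.Injective G)
    (η : ℝ) (hη : ∀ j, G j ≠ η) :
    transport m N β S G η ≤ synthQuantile N G α ↔
      ((η : ℝ) : EReal) ≤ fastThreshold m N β α S G := by
  obtain ⟨hα0, hα1⟩ := hα
  obtain ⟨hβ0, hβ1⟩ := hβ
  set ρ := rankOf m S η with hρ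
  have hρ1 : 1 ≤ ρ := rankOf_ge_one S η
  have hρm : ρ ≤ m + 1 := rankOf_le S η
  set q := qIdx N α with hq
  have hq1 : 1 ≤ q := qIdx_ge_one N hα1
  have hqN : q ≤ N + 1 := qIdx_le N hα0
  set Rm := Rminus m N β ρ with hRm
  set Rp := Rplus m N β ρ with hRp
  have hRm1 : 1 ≤ Rm := Rminus_ge_one m N ρ hβ0
  have hRmN : Rm ≤ N + 1 := Rminus_le_Nsucc m N ρ hβ0
  have hRp1 : 1 ≤ Rp := Rplus_ge_one m N ρ hβ0 hρ1 hρm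
  have hRpN : Rp ≤ N + 1 := Rplus_le_Nsucc m N ρ hβ0 hρ1 hρm
  have hRmRp : Rm ≤ Rp := Rminus_le_Rplus m N ρ hβ0 hβ1 hρ1 hρm
  have hRHS : (((η : ℝ)) : EReal) ≤ fastThreshold m N β α S G ↔
      ((((η : ℝ)) : EReal) ≤ synthSorted N G (q + 1) ∧ Rm ≤ q) ∨ Rp ≤ q := by
    rw [fastThreshold, le_max_iff, le_min_iff, ← hq]
    have h1 : (((η : ℝ)) : EReal) ≤ realSorted m S (RtilMinus m N β α) ↔ Rm ≤ q := by
      rw [rank_le_iff hm (RtilMinus_le_msucc m N β α), ← hρ]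
      exact le_RtilMinus_iff m N hβ0 hρ1 hρm
    have h2 : (((η : ℝ)) : EReal) ≤ realSorted m S (RtilPlus m N β α) ↔ Rp ≤ q := by
      rw [rank_le_iff hm (RtilPlus_le_msucc m N β α), ← hρ]
      exact le_RtilPlus_iff m N hβ0 hρ1 hρm
    rw [h1, h2]
  rw [hRHS]
  simp only [transport, windowHi, windowLo, synthQuantile, ← hρ, ← hq, ← hRm, ← hRp]
  by_cases hA : synthSorted N G Rp ≤ ((η : ℝ) : EReal)
  · rw [if_pos hA]
    have hRpN' : Rp ≤ N := by
      by_contra hc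
      have hRpeq : Rp = N + 1 := by omega
      have : synthSorted N G Rp = ⊤ := by
        unfold synthSorted
        rw [dif_neg (by omega)]
      rw [this, top_le_iff] at hA
      exact EReal.coe_ne_top η hA
    rw [synthSorted_le_iff hG hRp1 hRpN hq1 hqN]
    constructor
    · exact fun h => Or.inr h
    · rintro (⟨h1, h2⟩ | h)
      · by_contra hc
        push_neg at hc
        have h3 : synthSorted N G (q + 1) ≤ ((η : ℝ) : EReal) :=
          le_trans (synthSorted_mono (by omega) (by omega)) hA
        exact synthSorted_ne hη (by omega) (by omega) (le_antisymm h3 h1)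
      · exact h
  · by_cases hB : synthSorted N G Rm ≤ ((η : ℝ) : EReal)
    · rw [if_neg hA, if_pos hB]
      have hRmN' : Rm ≤ N := by
        by_contra hc
        have : synthSorted N G Rm = ⊤ := by
          unfold synthSorted
          rw [dif_neg (by omega)]
        rw [this, top_le_iff] at hB
        exact EReal.coe_ne_top η hB
      have hRmRp' : Rm < Rp := by
        rcases lt_or_eq_of_le hRmRp with h | h
        · exact h
        · exact absurd (h ▸ hB) hA
      set Jset : Set ℕ := {j | Rm ≤ j ∧ j ≤ Rp ∧ synthSorted N G j ≤ ((η : ℝ) : EReal)}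
        with hJset
      have hJne : Rm ∈ Jset := ⟨le_rfl, hRmRp, hB⟩
      have hJbdd : BddAbove Jset := ⟨Rp, fun j hj => hj.2.1⟩
      set jstar := sSup Jset with hjstar
      have hjmem : jstar ∈ Jset := Nat.sSup_mem ⟨Rm, hJne⟩ hJbdd
      have hNN : NNminus m N β G ρ η = synthSorted N G jstar := by
        apply le_antisymm
        · apply sSup_le
          rintro x ⟨j, hj1, hj2, rfl, hx⟩
          rw [← hRm] at hj1
          rw [← hRp] at hj2
          exact synthSorted_mono (by omega) (le_csSup hJbdd ⟨hj1, hj2, hx⟩)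
        · refine le_sSup ⟨jstar, ?_, ?_, rfl, hjmem.2.2⟩
          · rw [← hRm]; exact hjmem.1
          · rw [← hRp]; exact hjmem.2.1
      have hjstarRp : jstar < Rp := by
        rcases lt_or_eq_of_le hjmem.2.1 with h | h
        · exact h
        · exact absurd (h ▸ hjmem.2.2) hA
      have hjstar1 : 1 ≤ jstar := le_trans hRm1 hjmem.1
      rw [hNN, synthSorted_le_iff hG hjstar1 (by omega) hq1 hqN]
      constructor
      · intro h
        by_cases hc : Rp ≤ q
        · exact Or.inr hc
        · push_neg at hc
          left
          refine ⟨?_, le_trans hjmem.1 h⟩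
          rw [← not_synth_le_iff hη (by omega) (by omega)]
          intro hle
          have : q + 1 ≤ jstar := le_csSup hJbdd ⟨by have := hjmem.1; omega, by omega, hle⟩
          omega
      · rintro (⟨h1, h2⟩ | h)
        · by_contra hc
          push_neg at hc
          have h3 : synthSorted N G (q + 1) ≤ synthSorted N G jstar :=
            synthSorted_mono (by omega) (by omega)
          have h4 := le_trans h3 hjmem.2.2
          exact synthSorted_ne hη (by omega) (by omega) (le_antisymm h4 h1)
        · omega
    · rw [if_neg hA, if_neg hB]
      rw [synthSorted_le_iff hG hRm1 hRmN hq1 hqN]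
      constructor
      · intro h
        left
        refine ⟨?_, h⟩
        have hB' : ((η : ℝ) : EReal) ≤ synthSorted N G Rm := (not_le.mp hB).le
        exact le_trans hB' (synthSorted_mono hRm1 (by omega))
      · rintro (⟨h1, h2⟩ | h)
        · exact h2
        · omega
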